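/- Let (A, ⇒) be a slanted Heyting algebra on a bounded distributive lattice A, with π-extension ⇒^π on A^δ. Then the pseudo-residuation law holds globally: for all u, v, w ∈ A^δ, w ≤ u ⇒^π v if and only if w ∧ u ≤ ⊤ ⇒^π v. -/

import Mathlib

/-- A subordination algebra relation on a bounded distributive lattice. -/
structure SubordAlg (A : Type*) [DistribLattice A] [BoundedOrder A] where
  prec : A → A → Prop
  prec_bot : prec ⊥ ⊥
  prec_top : prec ⊤ ⊤
  prec_and : ∀ {a b c : A}, prec a b → prec a c → prec a (b ⊓ c)
  prec_or : ∀ {a b c : A}, prec a c → prec b c → prec (a ⊔ b) c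
  prec_wosi : ∀ {a b c d : A}, a ≤ b → prec b c → c ≤ d → prec a d

/-- A presentation of the canonical extension of a bounded (distributive) lattice `A`:
a complete lattice `Aδ` together with a dense and compact lattice embedding. -/
structure CanExt (A : Type*) [DistribLattice A] [BoundedOrder A]
    (Aδ : Type*) [CompleteLattice Aδ] where
  e : A → Aδ
  le_iff : ∀ a b : A, a ≤ b ↔ e a ≤ e b
  map_inf : ∀ a b : A, e (a ⊓ b) = e a ⊓ e b
  map_sup : ∀ a b : A, e (a ⊔ b) = e a ⊔ e b
  map_bot : e ⊥ = ⊥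
  map_top : e ⊤ = ⊤
  dense_closed : ∀ u : Aδ,
    u = sSup {k | (∃ F : Set A, F.Nonempty ∧ k = sInf (e '' F)) ∧ k ≤ u}
  dense_open : ∀ u : Aδ,
    u = sInf {o | (∃ I : Set A, I.Nonempty ∧ o = sSup (e '' I)) ∧ u ≤ o}
  compact : ∀ F I : Set A, F.Nonempty → I.Nonempty →
    sInf (e '' F) ≤ sSup (e '' I) →
    ∃ F' I' : Set A, F' ⊆ F ∧ I' ⊆ I ∧ F'.Finite ∧ I'.Finite ∧
      sInf (e '' F') ≤ sSup (e '' I')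

/-- Closed elements of the canonical extension: meets of nonempty subsets of `A`. -/
def CanExt.IsClosed {A : Type*} [DistribLattice A] [BoundedOrder A]
    {Aδ : Type*} [CompleteLattice Aδ] (C : CanExt A Aδ) (k : Aδ) : Prop :=
  ∃ F : Set A, F.Nonempty ∧ k = sInf (C.e '' F)

/-- Open elements of the canonical extension: joins of nonempty subsets of `A`. -/
def CanExt.IsOpen {A : Type*} [DistribLattice A] [BoundedOrder A]
    {Aδ : Type*} [CompleteLattice Aδ] (C : CanExt A Aδ) (o : Aδ) : Prop :=
  ∃ I : Set A, I.Nonempty ∧ o = sSup (C.e '' I)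

/-- The slanted implication `a ⇒_≺ b := ⋁{c | a ⊓ c ≺ b}` induced by a relation. -/
def slantImp {A : Type*} [DistribLattice A] [BoundedOrder A]
    {Aδ : Type*} [CompleteLattice Aδ] (C : CanExt A Aδ)
    (R : A → A → Prop) (a b : A) : Aδ :=
  sSup (C.e '' {c | R (a ⊓ c) b})

/-- The slanted co-implication `a ⩾_≺ b := ⋀{c | b ≺ a ⊔ c}` induced by a relation. -/
def slantCoimp {A : Type*} [DistribLattice A] [BoundedOrder A]
    {Aδ : Type*} [CompleteLattice Aδ] (C : CanExt A Aδ)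
    (R : A → A → Prop) (a b : A) : Aδ :=
  sInf (C.e '' {c | R b (a ⊔ c)})

/-- The slanted negation `¬a := ⋁{c | a ⊓ c ≺ ⊥}`. -/
def slantNeg {A : Type*} [DistribLattice A] [BoundedOrder A]
    {Aδ : Type*} [CompleteLattice Aδ] (C : CanExt A Aδ)
    (R : A → A → Prop) (a : A) : Aδ :=
  sSup (C.e '' {c | R (a ⊓ c) ⊥})

/-- The slanted co-negation `∼a := ⋀{c | ⊤ ≺ a ⊔ c}`. -/
def slantSim {A : Type*} [DistribLattice A] [BoundedOrder A]
    {Aδ : Type*} [CompleteLattice Aδ] (C : CanExt A Aδ)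
    (R : A → A → Prop) (a : A) : Aδ :=
  sInf (C.e '' {c | R ⊤ (a ⊔ c)})

/-- A slanted Heyting algebra over a canonical extension `C`. -/
structure SlantedHeyting (A : Type*) [DistribLattice A] [BoundedOrder A]
    (Aδ : Type*) [CompleteLattice Aδ] (C : CanExt A Aδ) where
  imp : A → A → Aδ
  imp_open : ∀ a b : A, C.IsOpen (imp a b)
  imp_inf : ∀ a b₁ b₂ : A, imp a (b₁ ⊓ b₂) = imp a b₁ ⊓ imp a b₂
  imp_top : ∀ a : A, imp a ⊤ = ⊤
  sup_imp : ∀ a₁ a₂ b : A, imp (a₁ ⊔ a₂) b = imp a₁ b ⊓ imp a₂ b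
  bot_imp : ∀ b : A, imp ⊥ b = ⊤
  resid : ∀ a b c : A, C.e c ≤ imp a b ↔ C.e (a ⊓ c) ≤ imp ⊤ b

/-- A slanted co-Heyting algebra over a canonical extension `C`. -/
structure SlantedCoHeyting (A : Type*) [DistribLattice A] [BoundedOrder A]
    (Aδ : Type*) [CompleteLattice Aδ] (C : CanExt A Aδ) where
  coimp : A → A → Aδ
  coimp_closed : ∀ a b : A, C.IsClosed (coimp a b)
  coimp_sup : ∀ a b₁ b₂ : A, coimp a (b₁ ⊔ b₂) = coimp a b₁ ⊔ coimp a b₂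
  coimp_bot : ∀ a : A, coimp a ⊥ = ⊥
  inf_coimp : ∀ a₁ a₂ b : A, coimp (a₁ ⊓ a₂) b = coimp a₁ b ⊔ coimp a₂ b
  top_coimp : ∀ b : A, coimp ⊤ b = ⊥
  resid : ∀ a b c : A, coimp a b ≤ C.e c ↔ coimp ⊥ b ≤ C.e (a ⊔ c)

/-- The π-extension of a slanted implication on a closed first argument and open
second argument: `k ⇒^π o := ⋁{a ⇒ b | k ≤ a, b ≤ o}`. -/
def impPiKO {A : Type*} [DistribLattice A] [BoundedOrder A]
    {Aδ : Type*} [CompleteLattice Aδ] {C : CanExt A Aδ}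
    (H : SlantedHeyting A Aδ C) (k o : Aδ) : Aδ :=
  sSup {u | ∃ a b : A, u = H.imp a b ∧ k ≤ C.e a ∧ C.e b ≤ o}

/-- The π-extension of a slanted implication on arbitrary arguments. -/
def impPi {A : Type*} [DistribLattice A] [BoundedOrder A]
    {Aδ : Type*} [CompleteLattice Aδ] {C : CanExt A Aδ}
    (H : SlantedHeyting A Aδ C) (u v : Aδ) : Aδ :=
  sInf {w | ∃ k o : Aδ, C.IsClosed k ∧ C.IsOpen o ∧ k ≤ u ∧ v ≤ o ∧ w = impPiKO H k o}

/-! By density of closed elements, both sides of the law reduce to inequalities between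
closed elements and values `k ⇒^π o` at closed `k` and open `o`. There the law becomes
`k' ≤ k ⇒^π o ↔ k ⊓ k' ≤ ⊤ ⇒^π o`, which compactness transfers from the residuation law of `A`:
`k ⇒^π o` is a directed join of open elements `a ⇒ b`, so a closed `k'` below it lies below
some `e c ≤ a ⇒ b`; conversely a meet `k ⊓ k'` of closed elements below the open `⊤ ⇒ b`
splits as `e a' ⊓ e c ≤ ⊤ ⇒ b` with `k ≤ e a'` and `k' ≤ e c`. -/

namespace CanExt

variable {A : Type*} [DistribLattice A] [BoundedOrder A] {Aδ : Type*} [CompleteLattice Aδ]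
  {C : CanExt A Aδ} {k k' o : Aδ}

lemma isClosed_top (C : CanExt A Aδ) : C.IsClosed ⊤ :=
  ⟨{⊤}, Set.singleton_nonempty ⊤, by simp [C.map_top]⟩

lemma IsClosed.inf (hk : C.IsClosed k) (hk' : C.IsClosed k') : C.IsClosed (k ⊓ k') := by
  obtain ⟨F, hF, rfl⟩ := hk
  obtain ⟨F', -, rfl⟩ := hk'
  exact ⟨F ∪ F', hF.mono Set.subset_union_left, by rw [Set.image_union, sInf_union]⟩

lemma exists_map_eq_sInf_image (C : CanExt A Aδ) {G : Set A} (hG : G.Finite) :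
    ∃ a, C.e a = sInf (C.e '' G) := by
  induction G, hG using Set.Finite.induction_on with
  | empty => exact ⟨⊤, by simp [C.map_top]⟩
  | @insert g G _ _ ih =>
    obtain ⟨a, ha⟩ := ih
    exact ⟨g ⊓ a, by rw [C.map_inf, ha, Set.image_insert_eq, sInf_insert]⟩

lemma le_of_forall_isClosed_le (C : CanExt A Aδ) {u v : Aδ}
    (h : ∀ k, C.IsClosed k → k ≤ u → k ≤ v) : u ≤ v := by
  rw [C.dense_closed u]
  exact sSup_le fun k ⟨hk, hku⟩ => h k hk hku

lemma IsClosed.exists_interpolant_inf (hk : C.IsClosed k) (hk' : C.IsClosed k')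
    (ho : C.IsOpen o) (h : k ⊓ k' ≤ o) :
    ∃ a c : A, k ≤ C.e a ∧ k' ≤ C.e c ∧ C.e a ⊓ C.e c ≤ o := by
  obtain ⟨F, hF, rfl⟩ := hk
  obtain ⟨F', -, rfl⟩ := hk'
  obtain ⟨I, hI, rfl⟩ := ho
  rw [← sInf_union, ← Set.image_union] at h
  obtain ⟨G, I', hGF, hI'I, hG, -, hGI'⟩ :=
    C.compact _ I (hF.mono Set.subset_union_left) hI h
  obtain ⟨a, ha⟩ := C.exists_map_eq_sInf_image (hG.inter_of_left F)
  obtain ⟨c, hc⟩ := C.exists_map_eq_sInf_image (hG.inter_of_left F')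
  refine ⟨a, c, ha ▸ sInf_le_sInf (Set.image_mono Set.inter_subset_right),
    hc ▸ sInf_le_sInf (Set.image_mono Set.inter_subset_right), ?_⟩
  rw [ha, hc, ← sInf_union, ← Set.image_union, ← Set.inter_union_distrib_left,
    Set.inter_eq_left.2 hGF]
  exact hGI'.trans (sSup_le_sSup (Set.image_mono hI'I))

lemma IsClosed.exists_interpolant (hk : C.IsClosed k) (ho : C.IsOpen o) (h : k ≤ o) :
    ∃ a : A, k ≤ C.e a ∧ C.e a ≤ o := by
  obtain ⟨a, c, hka, hc, hac⟩ :=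
    hk.exists_interpolant_inf C.isClosed_top ho (by rwa [inf_top_eq])
  rw [top_le_iff.1 hc, inf_top_eq] at hac
  exact ⟨a, hka, hac⟩

lemma IsClosed.exists_le_of_le_sSup (hk : C.IsClosed k) {S : Set Aδ} (hS : S.Nonempty)
    (hSo : ∀ s ∈ S, C.IsOpen s) (hSd : DirectedOn (· ≤ ·) S) (h : k ≤ sSup S) :
    ∃ s ∈ S, k ≤ s := by
  obtain ⟨F, hF, rfl⟩ := hk
  let J : Set A := ⋃ s ∈ S, {a | C.e a ≤ s}
  have hSJ : sSup S ≤ sSup (C.e '' J) := by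
    refine sSup_le fun s hs => ?_
    obtain ⟨I, -, rfl⟩ := hSo s hs
    exact sSup_le_sSup (Set.image_mono fun a ha => Set.mem_biUnion hs (le_sSup ⟨a, ha, rfl⟩))
  have hJ : J.Nonempty := ⟨⊥, Set.mem_biUnion hS.some_mem (by simp [C.map_bot])⟩
  obtain ⟨F', J', hF'F, hJ'J, -, hJ', hF'J'⟩ := C.compact F J hF hJ (h.trans hSJ)
  obtain ⟨s, hs, hJ's⟩ := DirectedOn.exists_mem_subset_of_finset_subset_biUnion hS
    (hSd.mono fun s t hst a (has : C.e a ≤ s) => has.trans hst) (s := hJ'.toFinset)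
    (by rwa [hJ'.coe_toFinset])
  rw [hJ'.coe_toFinset] at hJ's
  refine ⟨s, hs, (sInf_le_sInf (Set.image_mono hF'F)).trans (hF'J'.trans (sSup_le ?_))⟩
  rintro _ ⟨a, ha, rfl⟩
  exact hJ's ha

end CanExt

namespace SlantedHeyting

variable {A : Type*} [DistribLattice A] [BoundedOrder A] {Aδ : Type*} [CompleteLattice Aδ]
  {C : CanExt A Aδ} (H : SlantedHeyting A Aδ C)

lemma imp_mono_right {a b b' : A} (h : b ≤ b') : H.imp a b ≤ H.imp a b' := by
  rw [← inf_eq_left.2 h, H.imp_inf]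
  exact inf_le_right

lemma imp_anti_left {a a' b : A} (h : a ≤ a') : H.imp a' b ≤ H.imp a b := by
  rw [← sup_eq_right.2 h, H.sup_imp]
  exact inf_le_left

end SlantedHeyting

section PiExtension

variable {A : Type*} [DistribLattice A] [BoundedOrder A] {Aδ : Type*} [CompleteLattice Aδ]
  {C : CanExt A Aδ} (H : SlantedHeyting A Aδ C) {k k' o : Aδ}

lemma le_impPiKO_iff (hk' : C.IsClosed k') :
    k' ≤ impPiKO H k o ↔ ∃ a b : A, k ≤ C.e a ∧ C.e b ≤ o ∧ k' ≤ H.imp a b := by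
  refine ⟨fun h => ?_, fun ⟨a, b, hka, hbo, hk'ab⟩ => hk'ab.trans (le_sSup ⟨a, b, rfl, hka, hbo⟩)⟩
  have hne : {u | ∃ a b : A, u = H.imp a b ∧ k ≤ C.e a ∧ C.e b ≤ o}.Nonempty :=
    ⟨_, ⊤, ⊥, rfl, by simp [C.map_top], by simp [C.map_bot]⟩
  have hdir : DirectedOn (· ≤ ·) {u | ∃ a b : A, u = H.imp a b ∧ k ≤ C.e a ∧ C.e b ≤ o} := by
    rintro _ ⟨a₁, b₁, rfl, hka₁, hb₁o⟩ _ ⟨a₂, b₂, rfl, hka₂, hb₂o⟩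
    refine ⟨H.imp (a₁ ⊓ a₂) (b₁ ⊔ b₂),
      ⟨_, _, rfl, C.map_inf a₁ a₂ ▸ le_inf hka₁ hka₂, C.map_sup b₁ b₂ ▸ sup_le hb₁o hb₂o⟩, ?_, ?_⟩
    · exact (H.imp_anti_left inf_le_left).trans (H.imp_mono_right le_sup_left)
    · exact (H.imp_anti_left inf_le_right).trans (H.imp_mono_right le_sup_right)
  obtain ⟨_, ⟨a, b, rfl, hka, hbo⟩, hk'ab⟩ :=
    hk'.exists_le_of_le_sSup hne (by rintro _ ⟨a, b, rfl, -⟩; exact H.imp_open a b) hdir h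
  exact ⟨a, b, hka, hbo, hk'ab⟩

lemma impPiKO_anti_left {k₁ k₂ : Aδ} (h : k₁ ≤ k₂) : impPiKO H k₂ o ≤ impPiKO H k₁ o :=
  sSup_le_sSup fun _ ⟨a, b, hu, hka, hbo⟩ => ⟨a, b, hu, h.trans hka, hbo⟩

lemma le_impPi_iff {u v w : Aδ} : w ≤ impPi H u v ↔
    ∀ k o, C.IsClosed k → C.IsOpen o → k ≤ u → v ≤ o → w ≤ impPiKO H k o := by
  simp only [impPi, le_sInf_iff]
  exact ⟨fun h k o hk ho hku hvo => h _ ⟨k, o, hk, ho, hku, hvo, rfl⟩,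
    fun h _ ⟨k, o, hk, ho, hku, hvo, hw⟩ => hw ▸ h k o hk ho hku hvo⟩

lemma le_impPiKO_iff_inf_le (hk : C.IsClosed k) (hk' : C.IsClosed k') :
    k' ≤ impPiKO H k o ↔ k ⊓ k' ≤ impPiKO H ⊤ o := by
  rw [le_impPiKO_iff H hk', le_impPiKO_iff H (hk.inf hk')]
  constructor
  · rintro ⟨a, b, hka, hbo, hk'ab⟩
    obtain ⟨c, hk'c, hcab⟩ := hk'.exists_interpolant (H.imp_open a b) hk'ab
    refine ⟨⊤, b, C.map_top.ge, hbo, ?_⟩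
    calc k ⊓ k' ≤ C.e (a ⊓ c) := C.map_inf a c ▸ inf_le_inf hka hk'c
      _ ≤ H.imp ⊤ b := (H.resid a b c).1 hcab
  · rintro ⟨a, b, hta, hbo, hkk'⟩
    obtain rfl : a = ⊤ := top_le_iff.1 ((C.le_iff ⊤ a).2 (C.map_top ▸ hta))
    obtain ⟨a', c, hka', hk'c, hac⟩ := hk.exists_interpolant_inf hk' (H.imp_open ⊤ b) hkk'
    exact ⟨a', b, hka', hbo, hk'c.trans ((H.resid a' b c).2 (C.map_inf a' c ▸ hac))⟩

end PiExtension

theorem stmt9 {A : Type*} [DistribLattice A] [BoundedOrder A]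
    {Aδ : Type*} [CompleteLattice Aδ] {C : CanExt A Aδ}
    (H : SlantedHeyting A Aδ C) :
    ∀ u v w : Aδ, w ≤ impPi H u v ↔ w ⊓ u ≤ impPi H ⊤ v := by
  intro u v w
  rw [le_impPi_iff, le_impPi_iff]
  constructor
  · intro h k o _ ho _ hvo
    refine le_trans ?_ (impPiKO_anti_left H le_top)
    refine C.le_of_forall_isClosed_le fun c hc hcwu => ?_
    have hc_le : c ≤ impPiKO H c o :=
      (hcwu.trans inf_le_left).trans (h c o hc ho (hcwu.trans inf_le_right) hvo)
    simpa only [inf_idem] using (le_impPiKO_iff_inf_le H hc hc).1 hc_le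
  · intro h k o hk ho hku hvo
    refine C.le_of_forall_isClosed_le fun k' hk' hk'w => (le_impPiKO_iff_inf_le H hk hk').2 ?_
    exact (inf_le_inf hku hk'w).trans (inf_comm w u ▸ h ⊤ o C.isClosed_top ho le_top hvo)
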